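/- Let F be a field, N = a + b with a, b ≥ 0, and α = (n_1,…,n_k; r) with n_1+⋯+n_k+r = N; set ν_k = n_1+⋯+n_k = N − r. Let w̃ ∈ Sp_N(F) be a monomial matrix (exactly one nonzero entry in each row and each column) and let w = τ𝔠 be the induced signed permutation of [1,N] (for i ∈ [1,N], w̃ maps the line F·e_i into F·e_{τ(i)} if i ∉ 𝔠 and into F·e_{2N+1−τ(i)} if i ∈ 𝔠). Assume 𝔠 ⊆ [1, ν_k] and that w̃ P_α w̃⁻¹ contains P₀^H = j(B_a × B_b). Then 𝔠 = ∅. -/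

import Mathlib

/-!
Suppose `i ∈ 𝔠` and put `t = τ i`, so that column `i` of `w̃` is supported in row `t̄ = 2N-1-t`.
Since `w̃` is monomial and symplectic, row `t` is then supported in column `ī = 2N-1-i`.
The long root element `p = 1 + E_{t,t̄}` lies in `P₀^H`, so `q = w̃⁻¹ p w̃ ∈ P_α`, and comparing
the `(t, i)` entries of `p w̃ = w̃ q` gives `w̃(t̄, i) = w̃(t, ī) q(ī, i)`, whence `q(ī, i) ≠ 0`.
But `i < ν_k` lies in one of the first `k` blocks of `α` and `ī ≥ ν_k + 2r` in one of the last
`k`, so `q(ī, i)` is below the block diagonal and must vanish.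
-/

open scoped MatrixGroups Matrix

namespace Stmt5

variable (F : Type*) [Field F]

/-- Extension of a tuple `n : Fin k → ℕ` by zero to all of `ℕ`. -/
def nExt {k : ℕ} (n : Fin k → ℕ) : ℕ → ℕ := fun i => if h : i < k then n ⟨i, h⟩ else 0

/-- Partial sums `ν_j = n 0 + ⋯ + n (j-1)`. -/
def psum {k : ℕ} (n : Fin k → ℕ) (j : ℕ) : ℕ := ∑ i ∈ Finset.range j, nExt n i

/-- Block index of a position `x` with respect to the composition `c` with `K` parts. -/
def blkIdxF (c : ℕ → ℕ) (K : ℕ) (x : ℕ) : ℕ :=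
  ((Finset.range K).filter (fun j => (∑ i ∈ Finset.range (j + 1), c i) ≤ x)).card

/-- The symplectic form `J_N = [[0, w_N], [-w_N, 0]]`, `w_N` the antidiagonal matrix. -/
def Jmat (N : ℕ) : Matrix (Fin (2 * N)) (Fin (2 * N)) F :=
  fun i j => if (i : ℕ) + (j : ℕ) = 2 * N - 1 then (if (i : ℕ) < N then 1 else -1) else 0

/-- The symplectic group `Sp_N(F) = { g ∈ GL_{2N}(F) : ᵗg J_N g = J_N }` (as a set). -/
def SpSet (N : ℕ) : Set (GL (Fin (2 * N)) F) :=
  { g | (g.val)ᵀ * Jmat F N * g.val = Jmat F N }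

/-- The composition `(n_1, …, n_k, 2r, n_k, …, n_1)` of `2N` underlying the standard
parabolic subgroup of `Sp_N` attached to `(n_1, …, n_k; r)`. -/
def cSp {k : ℕ} (n : Fin k → ℕ) (r : ℕ) : ℕ → ℕ :=
  fun i => if i < k then nExt n i else if i = k then 2 * r else nExt n (2 * k - i)

/-- The standard parabolic subgroup `P_{(n_1,…,n_k;r)}` of `Sp_N` (as a set): block upper
triangular symplectic matrices with diagonal blocks `n_1, …, n_k, 2r, n_k, …, n_1`. -/
def PparSp (N : ℕ) {k : ℕ} (n : Fin k → ℕ) (r : ℕ) : Set (GL (Fin (2 * N)) F) :=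
  { g | g ∈ SpSet F N ∧ ∀ i j : Fin (2 * N),
      blkIdxF (cSp n r) (2 * k + 1) (j : ℕ) < blkIdxF (cSp n r) (2 * k + 1) (i : ℕ) →
        g.val i j = 0 }

/-- The standard Levi subgroup `M_{(n_1,…,n_k;r)}` of `Sp_N` (as a set). -/
def MparSp (N : ℕ) {k : ℕ} (n : Fin k → ℕ) (r : ℕ) : Set (GL (Fin (2 * N)) F) :=
  { g | g ∈ SpSet F N ∧ ∀ i j : Fin (2 * N),
      blkIdxF (cSp n r) (2 * k + 1) (j : ℕ) ≠ blkIdxF (cSp n r) (2 * k + 1) (i : ℕ) →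
        g.val i j = 0 }

/-- The doubled permutation `σ̃` of `[0, 2N)` attached to `σ ∈ S_N`:
`i ↦ σ i` and `2N - 1 - i ↦ 2N - 1 - σ i` for `i < N`. -/
def dPerm (N : ℕ) (σ : Equiv.Perm (Fin N)) : Equiv.Perm (Fin (2 * N)) :=
  (Equiv.permCongr (finSumFinEquiv.trans (finCongr (two_mul N).symm)))
    (Equiv.sumCongr σ (Fin.revPerm.trans (σ.trans Fin.revPerm)))

/-- The matrix `j(h₁, h₂)`: for `h₁ = [[A, B], [C, D]]` of size `2a × 2a` (blocks of size
`a × a`) and `h₂` of size `2b × 2b`, the `2(a+b) × 2(a+b)` matrix with `A, B, C, D` in the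
four corner `a × a` blocks and `h₂` in the central `2b × 2b` block. -/
def jEmbed (a b : ℕ) (h1 : Matrix (Fin (2 * a)) (Fin (2 * a)) F)
    (h2 : Matrix (Fin (2 * b)) (Fin (2 * b)) F) :
    Matrix (Fin (2 * (a + b))) (Fin (2 * (a + b))) F := fun x y =>
  if hx : (x : ℕ) < a then
    if hy : (y : ℕ) < a then h1 ⟨(x : ℕ), by omega⟩ ⟨(y : ℕ), by omega⟩
    else if hy2 : a + 2 * b ≤ (y : ℕ) then
      h1 ⟨(x : ℕ), by omega⟩ ⟨(y : ℕ) - 2 * b, by have := y.isLt; omega⟩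
    else 0
  else if hx2 : a + 2 * b ≤ (x : ℕ) then
    if hy : (y : ℕ) < a then
      h1 ⟨(x : ℕ) - 2 * b, by have := x.isLt; omega⟩ ⟨(y : ℕ), by omega⟩
    else if hy2 : a + 2 * b ≤ (y : ℕ) then
      h1 ⟨(x : ℕ) - 2 * b, by have := x.isLt; omega⟩ ⟨(y : ℕ) - 2 * b, by have := y.isLt; omega⟩
    else 0
  else
    if hy : a ≤ (y : ℕ) ∧ (y : ℕ) < a + 2 * b then
      h2 ⟨(x : ℕ) - a, by omega⟩ ⟨(y : ℕ) - a, by omega⟩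
    else 0

/-- Upper triangular invertible matrices. -/
def UTSet (M : ℕ) : Set (GL (Fin M) F) :=
  { g | ∀ i j : Fin M, (j : ℕ) < (i : ℕ) → g.val i j = 0 }

/-- The subgroup `H_{a,b} = j(Sp_a × Sp_b)` of `Sp_{a+b}` (as a set). -/
def HSet (a b : ℕ) : Set (GL (Fin (2 * (a + b))) F) :=
  { g | ∃ h1 : GL (Fin (2 * a)) F, h1 ∈ SpSet F a ∧
        ∃ h2 : GL (Fin (2 * b)) F, h2 ∈ SpSet F b ∧ g.val = jEmbed F a b h1.val h2.val }

/-- The subgroup `P₀^H = j(B_a × B_b)`, `B_c` the upper triangular subgroup of `Sp_c`. -/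
def P0HSp (a b : ℕ) : Set (GL (Fin (2 * (a + b))) F) :=
  { g | ∃ h1 : GL (Fin (2 * a)) F, h1 ∈ SpSet F a ∩ UTSet F (2 * a) ∧
        ∃ h2 : GL (Fin (2 * b)) F, h2 ∈ SpSet F b ∩ UTSet F (2 * b) ∧
          g.val = jEmbed F a b h1.val h2.val }

/-- A monomial matrix: exactly one nonzero entry in each row and in each column. -/
def IsMonomial {M : ℕ} (A : Matrix (Fin M) (Fin M) F) : Prop :=
  (∀ i, ∃! j, A i j ≠ 0) ∧ (∀ j, ∃! i, A i j ≠ 0)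

/-- Conjugation `g S g⁻¹` of a set by a group element. -/
def conjSet {M : ℕ} (g : GL (Fin M) F) (S : Set (GL (Fin M) F)) : Set (GL (Fin M) F) :=
  (fun h => g * h * g⁻¹) '' S

/-- Conjugation `σ S σ⁻¹` by the permutation matrix of `σ`. -/
def conjPerm {M : ℕ} (σ : Equiv.Perm (Fin M)) (S : Set (GL (Fin M) F)) :
    Set (GL (Fin M) F) :=
  { g | ∃ p ∈ S, g.val = (p.val).submatrix σ.symm σ.symm }

def blkPair {k : ℕ} (aT bT : Fin k → ℕ) (x : ℕ) : ℕ :=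
  ((Finset.range k).filter (fun j => psum aT (j + 1) + psum bT (j + 1) ≤ x)).card

def isBTab {k : ℕ} (aT bT : Fin k → ℕ) (x : ℕ) : Bool :=
  decide (psum aT (blkPair aT bT x + 1) + psum bT (blkPair aT bT x) ≤ x)

/-- The permutation `σ_T` attached to a table `T = (aT, bT)` (GL recipe). -/
noncomputable def sigmaTab (N : ℕ) {k : ℕ} (aT bT : Fin k → ℕ) : Equiv.Perm (Fin N) :=
  (Tuple.sort (fun x : Fin N => isBTab aT bT (x : ℕ)))⁻¹

section Transvection

variable {R : Type*} [CommRing R] {ι : Type*} [Fintype ι] [DecidableEq ι]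

lemma apply_ne_zero_of_transvection_mul_eq {g q : Matrix ι ι R} {t m x y : ι}
    (hrow : ∀ v, g t v ≠ 0 → v = x) (hty : g t y = 0) (hmy : g m y ≠ 0)
    (h : Matrix.transvection t m 1 * g = g * q) : q x y ≠ 0 := by
  have hentry := congrFun (congrFun h t) y
  have hsupp : ∀ v ∈ Finset.univ, v ≠ x → g t v * q v y = 0 := fun v _ hv =>
    by_contra fun h' => hv (hrow v (left_ne_zero_of_mul h'))
  rw [Matrix.transvection_mul_apply_same, hty, zero_add, one_mul, Matrix.mul_apply,
    Finset.sum_eq_single x hsupp (by simp)] at hentry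
  exact right_ne_zero_of_mul (hentry ▸ hmy)

end Transvection

section Symplectic

variable {F} {N : ℕ}

lemma ne_rev_self (t : Fin (2 * N)) : t ≠ t.rev := by
  intro h
  have := congrArg Fin.val h
  rw [Fin.val_rev] at this
  omega

lemma Jmat_rev_apply (t : Fin (2 * N)) : Jmat F N t.rev t = -Jmat F N t t.rev := by
  simp only [Jmat, Fin.val_rev]
  split_ifs <;> first | (exfalso; omega) | simp

lemma Jmat_apply_of_ne_rev {i j : Fin (2 * N)} (hij : j ≠ i.rev) : Jmat F N i j = 0 := by
  refine if_neg fun h => hij (Fin.ext ?_)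
  rw [Fin.val_rev]
  omega

lemma Jmat_apply_rev_ne_zero (i : Fin (2 * N)) : Jmat F N i i.rev ≠ 0 := by
  rw [Jmat, if_pos (by rw [Fin.val_rev]; omega)]
  split_ifs <;> simp

lemma apply_rev_rev_ne_zero_of_symplectic {g : Matrix (Fin (2 * N)) (Fin (2 * N)) F}
    (hg : gᵀ * Jmat F N * g = Jmat F N) {m y : Fin (2 * N)} (hcol : ∀ u, g u y ≠ 0 → u = m) :
    g m.rev y.rev ≠ 0 := by
  intro h0
  apply Jmat_apply_rev_ne_zero (F := F) y
  rw [← hg]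
  simp only [Matrix.mul_apply, Matrix.transpose_apply, Finset.sum_mul]
  refine Finset.sum_eq_zero fun v _ => Finset.sum_eq_zero fun u _ => ?_
  by_cases hu : g u y = 0
  · simp [hu]
  obtain rfl := hcol u hu
  by_cases hv : v = u.rev
  · simp [hv, h0]
  · simp [Jmat_apply_of_ne_rev hv]

end Symplectic

section Blocks

variable {c : ℕ → ℕ} {K x j : ℕ}

lemma blkIdxF_lt_of_lt_sum (hx : x < ∑ i ∈ Finset.range j, c i) : blkIdxF c K x < j := by
  have hsub : (Finset.range K).filter (fun j' => ∑ i ∈ Finset.range (j' + 1), c i ≤ x)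
      ⊆ Finset.range (j - 1) := by
    intro j' hj'
    simp only [Finset.mem_filter, Finset.mem_range] at hj' ⊢
    by_contra! hle
    have := Finset.sum_le_sum_of_subset (f := c)
      (Finset.range_subset_range.2 (show j ≤ j' + 1 by omega))
    omega
  have hj : j ≠ 0 := by rintro rfl; simp at hx
  calc blkIdxF c K x ≤ (Finset.range (j - 1)).card := Finset.card_le_card hsub
    _ < j := by rw [Finset.card_range]; omega

lemma le_blkIdxF_of_sum_le (hjK : j ≤ K) (hx : ∑ i ∈ Finset.range j, c i ≤ x) :
    j ≤ blkIdxF c K x := by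
  have hsub : Finset.range j
      ⊆ (Finset.range K).filter (fun j' => ∑ i ∈ Finset.range (j' + 1), c i ≤ x) := by
    intro j' hj'
    simp only [Finset.mem_filter, Finset.mem_range] at hj' ⊢
    refine ⟨by omega, le_trans ?_ hx⟩
    exact Finset.sum_le_sum_of_subset (Finset.range_subset_range.2 (by omega))
  simpa [blkIdxF] using Finset.card_le_card hsub

lemma sum_range_cSp {k : ℕ} (n : Fin k → ℕ) (r : ℕ) :
    ∑ i ∈ Finset.range k, cSp n r i = ∑ i, n i := by
  rw [← Fin.sum_univ_eq_sum_range]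
  exact Finset.sum_congr rfl fun i _ => by simp [cSp, nExt]

lemma blkIdxF_cSp_lt_rev {k : ℕ} {n : Fin k → ℕ} {r N : ℕ} (hsum : (∑ i, n i) + r = N)
    {x : Fin (2 * N)} (hx : (x : ℕ) < ∑ i, n i) :
    blkIdxF (cSp n r) (2 * k + 1) x < blkIdxF (cSp n r) (2 * k + 1) x.rev := by
  have hlt : blkIdxF (cSp n r) (2 * k + 1) x < k :=
    blkIdxF_lt_of_lt_sum (by rwa [sum_range_cSp])
  have hle : k + 1 ≤ blkIdxF (cSp n r) (2 * k + 1) x.rev := by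
    refine le_blkIdxF_of_sum_le (by omega) ?_
    rw [Finset.sum_range_succ, sum_range_cSp, Fin.val_rev]
    simp only [cSp, lt_irrefl, if_false, if_true]
    omega
  omega

end Blocks

section LongRoot

variable {F} {N : ℕ}

lemma transvection_rev_symplectic (t : Fin (2 * N)) :
    (Matrix.transvection t t.rev (1 : F))ᵀ * Jmat F N * Matrix.transvection t t.rev 1
      = Jmat F N := by
  ext x z
  simp only [Matrix.transvection, Matrix.transpose_add, Matrix.transpose_one,
    Matrix.transpose_single, Matrix.add_mul, Matrix.mul_add, Matrix.one_mul, Matrix.mul_one,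
    Matrix.single_mul_mul_single, Jmat_apply_of_ne_rev (ne_rev_self t), mul_zero,
    Matrix.add_apply]
  by_cases hx : x = t.rev <;> by_cases hz : z = t.rev
  · subst hx hz
    simp [Jmat_rev_apply]
  · subst hx
    simp [Matrix.mul_single_apply_of_ne _ _ _ _ _ hz, Jmat_apply_of_ne_rev hz]
  · subst hz
    have hxt : t ≠ x.rev := fun h => hx (by rw [h, Fin.rev_rev])
    simp [Matrix.single_mul_apply_of_ne _ _ _ _ _ hx, Jmat_apply_of_ne_rev hxt]
  · simp [Matrix.single_mul_apply_of_ne _ _ _ _ _ hx, Matrix.mul_single_apply_of_ne _ _ _ _ _ hz]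

lemma transvection_apply_of_lt {M : ℕ} {p q i j : Fin M} (hpq : p < q) (hji : j < i) (c : F) :
    Matrix.transvection p q c i j = 0 := by
  have hpi : ¬(p = i ∧ q = j) := by
    rintro ⟨rfl, rfl⟩
    exact lt_asymm hpq hji
  simp [Matrix.transvection, Matrix.one_apply_ne hji.ne', hpi]

variable (F) in
noncomputable def longRootGL (t : Fin (2 * N)) : GL (Fin (2 * N)) F :=
  Matrix.GeneralLinearGroup.mkOfDetNeZero (Matrix.transvection t t.rev 1)
    (by rw [Matrix.det_transvection_of_ne _ _ (ne_rev_self t)]; exact one_ne_zero)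

lemma longRootGL_mem_SpSet_inter_UTSet (t : Fin (2 * N)) (ht : (t : ℕ) < N) :
    longRootGL F t ∈ SpSet F N ∩ UTSet F (2 * N) :=
  ⟨transvection_rev_symplectic t, fun _ _ hji =>
    transvection_apply_of_lt (Fin.lt_def.2 (by rw [Fin.val_rev]; omega)) hji 1⟩

lemma one_mem_SpSet_inter_UTSet : (1 : GL (Fin (2 * N)) F) ∈ SpSet F N ∩ UTSet F (2 * N) :=
  ⟨by simp [SpSet], fun _ _ hji => Matrix.one_apply_ne (by omega)⟩

end LongRoot

section Embedding

variable {F} {a b : ℕ}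

lemma jEmbed_transvection_rev_one {t : ℕ} (ht : t < a) :
    jEmbed F a b (Matrix.transvection (⟨t, by omega⟩ : Fin (2 * a)) (Fin.rev ⟨t, by omega⟩) 1) 1
      = Matrix.transvection (⟨t, by omega⟩ : Fin (2 * (a + b))) (Fin.rev ⟨t, by omega⟩) 1 := by
  ext x z
  have hx := x.isLt
  have hz := z.isLt
  simp only [jEmbed, Matrix.transvection, Matrix.add_apply, Matrix.one_apply, Matrix.single_apply,
    Fin.ext_iff, Fin.val_rev]
  split_ifs <;> first | rfl | (exfalso; omega) | simp

lemma jEmbed_one_transvection_rev {t : ℕ} (hat : a ≤ t) (ht : t < a + b) :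
    jEmbed F a b 1
      (Matrix.transvection (⟨t - a, by omega⟩ : Fin (2 * b)) (Fin.rev ⟨t - a, by omega⟩) 1)
      = Matrix.transvection (⟨t, by omega⟩ : Fin (2 * (a + b))) (Fin.rev ⟨t, by omega⟩) 1 := by
  ext x z
  have hx := x.isLt
  have hz := z.isLt
  simp only [jEmbed, Matrix.transvection, Matrix.add_apply, Matrix.one_apply, Matrix.single_apply,
    Fin.ext_iff, Fin.val_rev]
  split_ifs <;> first | rfl | (exfalso; omega) | simp

lemma longRootGL_mem_P0HSp (t : Fin (2 * (a + b))) (ht : (t : ℕ) < a + b) :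
    longRootGL F t ∈ P0HSp F a b := by
  rcases lt_or_ge (t : ℕ) a with hta | hta
  · exact ⟨longRootGL F ⟨t, by omega⟩, longRootGL_mem_SpSet_inter_UTSet _ hta,
      1, one_mem_SpSet_inter_UTSet, (jEmbed_transvection_rev_one hta).symm⟩
  · exact ⟨1, one_mem_SpSet_inter_UTSet, longRootGL F ⟨t - a, by omega⟩,
      longRootGL_mem_SpSet_inter_UTSet _ (show (t : ℕ) - a < b by omega),
      (jEmbed_one_transvection_rev hta ht).symm⟩

end Embedding

theorem stmt5 (a b k : ℕ) (n : Fin k → ℕ) (r : ℕ)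
    (hsum : (∑ i, n i) + r = a + b)
    (w : GL (Fin (2 * (a + b))) F) (hSp : w ∈ SpSet F (a + b)) (hMon : IsMonomial F w.val)
    (τ : Equiv.Perm (Fin (a + b))) (c : Finset (Fin (a + b)))
    (hw : ∀ (i : Fin (a + b)) (row : Fin (2 * (a + b))),
      w.val row (Fin.castLE (by omega) i) ≠ 0 →
        (row : ℕ) = if i ∈ c then 2 * (a + b) - 1 - (τ i : ℕ) else (τ i : ℕ))
    (hc : ∀ i ∈ c, (i : ℕ) < ∑ i, n i)
    (hcont : P0HSp F a b ⊆ conjSet F w (PparSp F (a + b) n r)) :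
    c = ∅ := by
  by_contra hne
  obtain ⟨i, hi⟩ := Finset.nonempty_iff_ne_empty.2 hne
  set y : Fin (2 * (a + b)) := Fin.castLE (by omega) i
  set t : Fin (2 * (a + b)) := Fin.castLE (by omega) (τ i)
  have hcol : ∀ u, w.val u y ≠ 0 → u = t.rev := fun u hu => Fin.ext <| by
    rw [hw i u hu, if_pos hi, Fin.val_rev, Fin.val_castLE]
    omega
  have hmy : w.val t.rev y ≠ 0 := by
    obtain ⟨u, hu, -⟩ := hMon.2 y
    rwa [hcol u hu] at hu
  have htx : w.val t y.rev ≠ 0 := by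
    simpa using apply_rev_rev_ne_zero_of_symplectic hSp hcol
  obtain ⟨q, hq, hqw⟩ := hcont (longRootGL_mem_P0HSp t (τ i).isLt)
  have hcomm : (longRootGL F t).val * w.val = w.val * q.val := by
    rw [← hqw]
    simp [mul_assoc]
  refine apply_ne_zero_of_transvection_mul_eq (fun v hv => (hMon.1 t).unique hv htx)
    (by_contra fun h => ne_rev_self t (hcol t h)) hmy hcomm
    (hq.2 _ _ (blkIdxF_cSp_lt_rev hsum (hc i hi)))

end Stmt5
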